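/- arXiv:2207.03528 — 5 statements merged into one kernel-verified Lean document; each statement's English description precedes it below -/
import Mathlib

section
/- Let H be a bialgebra over a field k generated as an algebra by a set of group-like elements together with elements t i j (i,j ∈ Fin n) satisfying Δ(t i j) = ∑_k t i k ⊗ t k j and ε(t i j) = δ_{ij}. If there exists an algebra anti-homomorphism S : H → H such that S(D) = D⁻¹ for every group-like generator D (each assumed invertible) and the matrix (S(t i j)) is a two-sided inverse of the matrix (t i j) in M_n(H), then H is a Hopf algebra with antipode S. -/
open scoped TensorProduct

section aux
variable {k : Type*} [Field k] {H : Type*} [Ring H] [Bialgebra k H]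

noncomputable def Lmap (S : H →ₗ[k] H) (w : H) : H ⊗[k] H →ₗ[k] H :=
  LinearMap.mul' k H ∘ₗ LinearMap.rTensor H ((LinearMap.mulRight k w) ∘ₗ S)

noncomputable def Rmap (S : H →ₗ[k] H) (w : H) : H ⊗[k] H →ₗ[k] H :=
  LinearMap.mul' k H ∘ₗ TensorProduct.map (LinearMap.mulRight k w) S

lemma Lmap_tmul (S : H →ₗ[k] H) (w c d : H) : Lmap S w (c ⊗ₜ[k] d) = (S c * w) * d := rfl

lemma Rmap_tmul (S : H →ₗ[k] H) (w a b : H) : Rmap S w (a ⊗ₜ[k] b) = (a * w) * S b := rfl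

lemma Lmap_add (S : H →ₗ[k] H) (w w' : H) (v : H ⊗[k] H) :
    Lmap S (w + w') v = Lmap S w v + Lmap S w' v := by
  induction v using TensorProduct.induction_on with
  | zero => simp
  | tmul c d => simp [Lmap_tmul, mul_add, add_mul]
  | add x y hx hy => simp [map_add, hx, hy]; abel

lemma Lmap_smul (S : H →ₗ[k] H) (r : k) (w : H) (v : H ⊗[k] H) :
    Lmap S (r • w) v = r • Lmap S w v := by
  induction v using TensorProduct.induction_on with
  | zero => simp
  | tmul c d => simp [Lmap_tmul, mul_smul_comm, smul_mul_assoc]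
  | add x y hx hy => simp [map_add, hx, hy]

lemma Lmap_zero (S : H →ₗ[k] H) (v : H ⊗[k] H) : Lmap S 0 v = 0 := by
  have := Lmap_smul S 0 0 v; simpa using this

lemma Rmap_add (S : H →ₗ[k] H) (w w' : H) (v : H ⊗[k] H) :
    Rmap S (w + w') v = Rmap S w v + Rmap S w' v := by
  induction v using TensorProduct.induction_on with
  | zero => simp
  | tmul a b => simp [Rmap_tmul, mul_add, add_mul]
  | add x y hx hy => simp [map_add, hx, hy]; abel

lemma Rmap_smul (S : H →ₗ[k] H) (r : k) (w : H) (v : H ⊗[k] H) :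
    Rmap S (r • w) v = r • Rmap S w v := by
  induction v using TensorProduct.induction_on with
  | zero => simp
  | tmul a b => simp [Rmap_tmul, mul_smul_comm, smul_mul_assoc]
  | add x y hx hy => simp [map_add, hx, hy]

lemma Rmap_zero (S : H →ₗ[k] H) (v : H ⊗[k] H) : Rmap S 0 v = 0 := by
  have := Rmap_smul S 0 0 v; simpa using this

lemma Lmap_one (S : H →ₗ[k] H) (v : H ⊗[k] H) :
    Lmap S 1 v = LinearMap.mul' k H (S.rTensor H v) := by
  induction v using TensorProduct.induction_on with
  | zero => simp
  | tmul c d => simp [Lmap_tmul]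
  | add x y hx hy => simp [map_add, hx, hy]

lemma Rmap_one (S : H →ₗ[k] H) (v : H ⊗[k] H) :
    Rmap S 1 v = LinearMap.mul' k H (S.lTensor H v) := by
  induction v using TensorProduct.induction_on with
  | zero => simp
  | tmul a b => simp [Rmap_tmul, LinearMap.lTensor_tmul]
  | add x y hx hy => simp [map_add, hx, hy]

lemma key1 (S : H →ₗ[k] H) (hanti : ∀ x y : H, S (x * y) = S y * S x)
    (u v : H ⊗[k] H) :
    LinearMap.mul' k H (S.rTensor H (u * v)) =
      Lmap S (LinearMap.mul' k H (S.rTensor H u)) v := by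
  induction u using TensorProduct.induction_on with
  | zero => simp [Lmap_zero]
  | tmul a b =>
    induction v using TensorProduct.induction_on with
    | zero => simp
    | tmul c d =>
      simp only [Algebra.TensorProduct.tmul_mul_tmul, LinearMap.rTensor_tmul,
        LinearMap.mul'_apply, Lmap_tmul, hanti]
      noncomm_ring
    | add x y hx hy => simp only [mul_add, map_add, hx, hy]
  | add x y hx hy =>
    simp only [add_mul, map_add, hx, hy, Lmap_add]

lemma key2 (S : H →ₗ[k] H) (hanti : ∀ x y : H, S (x * y) = S y * S x)
    (u v : H ⊗[k] H) :
    LinearMap.mul' k H (S.lTensor H (u * v)) =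
      Rmap S (LinearMap.mul' k H (S.lTensor H v)) u := by
  induction v using TensorProduct.induction_on with
  | zero => simp [Rmap_zero]
  | tmul c d =>
    induction u using TensorProduct.induction_on with
    | zero => simp
    | tmul a b =>
      simp only [Algebra.TensorProduct.tmul_mul_tmul, LinearMap.lTensor_tmul,
        LinearMap.mul'_apply, Rmap_tmul, hanti]
      noncomm_ring
    | add x y hx hy => simp only [add_mul, map_add, hx, hy]
  | add x y hx hy =>
    simp only [mul_add, map_add, hx, hy, Rmap_add]

end aux
/-- If a bialgebra `H` is generated by invertible group-like elements `g i` and comatrix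
elements `t i j`, and `S : H → H` is a linear anti-algebra map inverting the group-like
generators and inverting the matrix `(t i j)`, then `S` is an antipode, i.e. `H` is a
Hopf algebra with antipode `S`. -/
theorem stmt1 {k : Type*} [Field k] {H : Type*} [Ring H] [Bialgebra k H]
    {n : ℕ} (t : Fin n → Fin n → H) {ι : Type*} (g : ι → H) (gu : ι → Hˣ)
    (hgu : ∀ i, (gu i : H) = g i)
    (hgrouplike : ∀ i, Coalgebra.comul (R := k) (g i) = g i ⊗ₜ[k] g i ∧
      Coalgebra.counit (R := k) (g i) = 1)
    (hΔ : ∀ i j, Coalgebra.comul (R := k) (t i j) = ∑ l, t i l ⊗ₜ[k] t l j)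
    (hε : ∀ i j, Coalgebra.counit (R := k) (t i j) = if i = j then (1 : k) else 0)
    (hgen : Algebra.adjoin k (Set.range g ∪ {x | ∃ i j, x = t i j}) = ⊤)
    (S : H →ₗ[k] H)
    (hanti : ∀ x y : H, S (x * y) = S y * S x) (hone : S 1 = 1)
    (hSg : ∀ i, S (g i) = ((gu i)⁻¹ : Hˣ))
    (hSt₁ : (Matrix.of t) * (Matrix.of fun i j => S (t i j)) = 1)
    (hSt₂ : (Matrix.of fun i j => S (t i j)) * (Matrix.of t) = 1) :
    LinearMap.mul' k H ∘ₗ S.rTensor H ∘ₗ Coalgebra.comul =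
      Algebra.linearMap k H ∘ₗ Coalgebra.counit ∧
    LinearMap.mul' k H ∘ₗ S.lTensor H ∘ₗ Coalgebra.comul =
      Algebra.linearMap k H ∘ₗ Coalgebra.counit := by
  set T₁ : H →ₗ[k] H := LinearMap.mul' k H ∘ₗ S.rTensor H ∘ₗ Coalgebra.comul with hT₁
  set T₂ : H →ₗ[k] H := LinearMap.mul' k H ∘ₗ S.lTensor H ∘ₗ Coalgebra.comul with hT₂
  set E : H →ₗ[k] H := Algebra.linearMap k H ∘ₗ Coalgebra.counit with hE
  have hEdef : ∀ x : H, E x = Coalgebra.counit (R := k) x • (1 : H) := by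
    intro x; simp [hE, Algebra.algebraMap_eq_smul_one]
  -- the subalgebra where both antipode identities hold
  have hmul : ∀ x y : H, T₁ x = E x → T₁ y = E y → T₂ x = E x → T₂ y = E y →
      (T₁ (x * y) = E (x * y) ∧ T₂ (x * y) = E (x * y)) := by
    intro x y h1x h1y h2x h2y
    constructor
    · calc T₁ (x * y) = LinearMap.mul' k H (S.rTensor H
            (Coalgebra.comul (R := k) x * Coalgebra.comul y)) := by
            simp [hT₁, Bialgebra.comul_mul]
        _ = Lmap S (T₁ x) (Coalgebra.comul (R := k) y) := key1 S hanti _ _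
        _ = Coalgebra.counit (R := k) x • Lmap S 1 (Coalgebra.comul (R := k) y) := by
            rw [h1x, hEdef, Lmap_smul]
        _ = Coalgebra.counit (R := k) x • T₁ y := by rw [Lmap_one]; rfl
        _ = E (x * y) := by
            rw [h1y, hEdef, hEdef, smul_smul, Bialgebra.counit_mul]
    · calc T₂ (x * y) = LinearMap.mul' k H (S.lTensor H
            (Coalgebra.comul (R := k) x * Coalgebra.comul y)) := by
            simp [hT₂, Bialgebra.comul_mul]
        _ = Rmap S (T₂ y) (Coalgebra.comul (R := k) x) := key2 S hanti _ _
        _ = Coalgebra.counit (R := k) y • Rmap S 1 (Coalgebra.comul (R := k) x) := by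
            rw [h2y, hEdef, Rmap_smul]
        _ = Coalgebra.counit (R := k) y • T₂ x := by rw [Rmap_one]; rfl
        _ = E (x * y) := by
            rw [h2x, hEdef, hEdef, smul_smul, Bialgebra.counit_mul, mul_comm]
  have hone' : T₁ 1 = E 1 ∧ T₂ 1 = E 1 := by
    constructor <;>
    · simp only [hT₁, hT₂, hE, LinearMap.comp_apply, Bialgebra.comul_one,
        Bialgebra.counit_one, Algebra.TensorProduct.one_def, LinearMap.rTensor_tmul,
        LinearMap.lTensor_tmul, LinearMap.mul'_apply, hone, Algebra.linearMap_apply,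
        map_one, mul_one, one_mul]
  let A : Subalgebra k H :=
  { carrier := {x | T₁ x = E x ∧ T₂ x = E x}
    mul_mem' := fun {x y} hx hy => hmul x y hx.1 hy.1 hx.2 hy.2
    one_mem' := hone'
    add_mem' := fun {x y} hx hy => by
      constructor <;> simp only [Set.mem_setOf_eq] at * <;>
        simp [map_add, hx.1, hy.1, hx.2, hy.2]
    zero_mem' := by constructor <;> simp
    algebraMap_mem' := fun r => by
      have h1 := hone'
      constructor <;>
      · show _ = _
        rw [Algebra.algebraMap_eq_smul_one, map_smul, map_smul]
        first
        | rw [h1.1]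
        | rw [h1.2] }
  have hgA : ∀ i, g i ∈ A := by
    intro i
    obtain ⟨hc, he⟩ := hgrouplike i
    constructor
    · show T₁ (g i) = E (g i)
      rw [hT₁, hEdef]
      simp only [LinearMap.comp_apply, hc, he, LinearMap.rTensor_tmul,
        LinearMap.mul'_apply, one_smul]
      rw [hSg i, ← hgu i]
      simp
    · show T₂ (g i) = E (g i)
      rw [hT₂, hEdef]
      simp only [LinearMap.comp_apply, hc, he, LinearMap.lTensor_tmul,
        LinearMap.mul'_apply, one_smul]
      rw [hSg i, ← hgu i]
      simp
  have htA : ∀ i j, t i j ∈ A := by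
    intro i j
    have h1 : ∑ l, S (t i l) * t l j = if i = j then (1 : H) else 0 := by
      have := congrFun (congrFun hSt₂ i) j
      simpa [Matrix.mul_apply, Matrix.one_apply] using this
    have h2 : ∑ l, t i l * S (t l j) = if i = j then (1 : H) else 0 := by
      have := congrFun (congrFun hSt₁ i) j
      simpa [Matrix.mul_apply, Matrix.one_apply] using this
    have hEt : E (t i j) = if i = j then (1 : H) else 0 := by
      rw [hEdef, hε]
      split <;> simp
    constructor
    · show T₁ (t i j) = E (t i j)
      rw [hT₁, hEt]
      simp only [LinearMap.comp_apply, hΔ, map_sum, LinearMap.rTensor_tmul,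
        LinearMap.mul'_apply]
      exact h1
    · show T₂ (t i j) = E (t i j)
      rw [hT₂, hEt]
      simp only [LinearMap.comp_apply, hΔ, map_sum, LinearMap.lTensor_tmul,
        LinearMap.mul'_apply]
      exact h2
  have htop : ∀ x : H, x ∈ A := by
    intro x
    have : Algebra.adjoin k (Set.range g ∪ {x | ∃ i j, x = t i j}) ≤ A := by
      rw [Algebra.adjoin_le_iff]
      rintro y (⟨i, rfl⟩ | ⟨i, j, rfl⟩)
      · exact hgA i
      · exact htA i j
    exact this (hgen ▸ Algebra.mem_top)
  exact ⟨LinearMap.ext fun x => (htop x).1, LinearMap.ext fun x => (htop x).2⟩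
end

section
/- Let A be a (possibly noncommutative) ring and T, U ∈ M_n(A) matrices such that T·U = 1 = U·T. Suppose c : Fin n × Fin n × Fin n × Fin n → A is a family of central scalars and the 'FRT relations' ∑_{k,ℓ} c(i,j,k,ℓ)·T_{k r}·T_{ℓ s} = ∑_{k,ℓ} T_{i k}·T_{j ℓ}·c(k,ℓ,r,s) hold for all i,j,r,s. Then the 'opposite' relations ∑_{k,ℓ} c(i,j,k,ℓ)·U_{ℓ s}·U_{k r} = ∑_{k,ℓ} U_{j ℓ}·U_{i k}·c(k,ℓ,r,s) hold for all i,j,r,s. -/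
/-!
Index the four-index data by `Fin n × Fin n`: with `C (i, j) (r, s) = c i j r s` the FRT relation
says that `C` commutes with `T ⊗ₖ T`. Over a noncommutative ring `T ⊗ₖ T` is inverted not by
`U ⊗ₖ U` but by the Kronecker product with the factors multiplied in reverse order,
`(i, j), (r, s) ↦ U j s * U i r`. Whatever commutes with a unit commutes with its inverse, and
read entrywise that is the claim.
-/

open Matrix
open scoped Kronecker

namespace Matrix

variable {α m n : Type*} [Semiring α] [Fintype m] [Fintype n] [DecidableEq m] [DecidableEq n]

theorem kronecker_mul_kroneckerMap_flip_eq_one {A A' : Matrix m m α} {B B' : Matrix n n α}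
    (hA : A * A' = 1) (hB : B * B' = 1) :
    A ⊗ₖ B * kroneckerMap (fun a b => b * a) A' B' = 1 := by
  ext ⟨i, j⟩ ⟨r, s⟩
  calc (A ⊗ₖ B * kroneckerMap (fun a b => b * a) A' B') (i, j) (r, s)
      = ∑ k, A i k * (B * B') j s * A' k r := by
        simp only [mul_apply, Fintype.sum_prod_type, kroneckerMap_apply,
          Finset.mul_sum, Finset.sum_mul, mul_assoc]
    _ = (A * A') i r * (B * B') j s := by
        rw [hB]; rcases eq_or_ne j s with rfl | hjs <;> simp [mul_apply, *]
    _ = (1 : Matrix (m × n) (m × n) α) (i, j) (r, s) := by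
        rw [hA, hB, ← kronecker_apply, one_kronecker_one]

theorem kroneckerMap_flip_mul_kronecker_eq_one {A A' : Matrix m m α} {B B' : Matrix n n α}
    (hA : A' * A = 1) (hB : B' * B = 1) :
    kroneckerMap (fun a b => b * a) A' B' * A ⊗ₖ B = 1 := by
  ext ⟨i, j⟩ ⟨r, s⟩
  calc (kroneckerMap (fun a b => b * a) A' B' * A ⊗ₖ B) (i, j) (r, s)
      = ∑ l, B' j l * (A' * A) i r * B l s := by
        simp only [mul_apply, Fintype.sum_prod_type, kroneckerMap_apply,
          Finset.mul_sum, Finset.sum_mul, mul_assoc]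
        exact Finset.sum_comm
    _ = (A' * A) i r * (B' * B) j s := by
        rw [hA]; rcases eq_or_ne i r with rfl | hir <;> simp [mul_apply, *]
    _ = (1 : Matrix (m × n) (m × n) α) (i, j) (r, s) := by
        rw [hA, hB, ← kronecker_apply, one_kronecker_one]

end Matrix

theorem stmt2_general {A : Type*} [Ring A] {n : ℕ}
    (c : Fin n → Fin n → Fin n → Fin n → A)
    (T U : Matrix (Fin n) (Fin n) A)
    (hTU : T * U = 1) (hUT : U * T = 1)
    (hFRT : ∀ i j r s, ∑ l, ∑ m, c i j l m * T l r * T m s =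
      ∑ l, ∑ m, T i l * T j m * c l m r s) :
    ∀ i j r s, ∑ l, ∑ m, c i j l m * U m s * U l r =
      ∑ l, ∑ m, U j m * U i l * c l m r s := by
  let C : Matrix (Fin n × Fin n) (Fin n × Fin n) A := of fun p q => c p.1 p.2 q.1 q.2
  let TT : (Matrix (Fin n × Fin n) (Fin n × Fin n) A)ˣ :=
    ⟨T ⊗ₖ T, kroneckerMap (fun a b => b * a) U U,
      kronecker_mul_kroneckerMap_flip_eq_one hTU hTU,
      kroneckerMap_flip_mul_kronecker_eq_one hUT hUT⟩
  have hC : Commute C TT := by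
    ext ⟨i, j⟩ ⟨r, s⟩
    simpa [C, TT, mul_apply, Fintype.sum_prod_type, mul_assoc] using hFRT i j r s
  intro i j r s
  simpa [C, TT, mul_apply, Fintype.sum_prod_type, mul_assoc] using
    congr_fun₂ hC.units_inv_right.eq (i, j) (r, s)

/-- The FRT-type relations for an invertible matrix `T` imply the opposite relations
for its inverse `U`, provided the coefficients `c` are central. -/
theorem stmt2 {A : Type*} [Ring A] {n : ℕ}
    (c : Fin n → Fin n → Fin n → Fin n → A)
    (hc : ∀ i j k l, c i j k l ∈ Set.center A)
    (T U : Matrix (Fin n) (Fin n) A)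
    (hTU : T * U = 1) (hUT : U * T = 1)
    (hFRT : ∀ i j r s, ∑ l, ∑ m, c i j l m * T l r * T m s =
      ∑ l, ∑ m, T i l * T j m * c l m r s) :
    ∀ i j r s, ∑ l, ∑ m, c i j l m * U m s * U l r =
      ∑ l, ∑ m, U j m * U i l * c l m r s :=
  stmt2_general c T U hTU hUT hFRT
end

section
/- Let k be a field, V finite-dimensional with basis (x_i), and f : V^{⊗n₁} → V^{⊗n₂} a linear map with coefficients f_I^J (f(x_I) = ∑_J f_I^J x_J in multi-index notation). Then the two-sided ideal I_f of the free algebra k⟨t_{ij}⟩ generated by the elements ∑_J (t_I^J f_J^K − f_I^J t_J^K) for all multi-indices I (length n₁) and K (length n₂) is a coideal: Δ(I_f) ⊆ I_f ⊗ F + F ⊗ I_f and ε(I_f) = 0, where F = k⟨t_{ij}⟩ with Δ(t_{ij}) = ∑_k t_{ik} ⊗ t_{kj}, ε(t_{ij}) = δ_{ij}. Hence the quotient A(f) = F/I_f is a bialgebra. -/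
open scoped TensorProduct

/-- The comultiplication of the free (comatrix) bialgebra on generators `t i j`. -/
noncomputable def freeComul (k : Type*) [Field k] (m : ℕ) :
    FreeAlgebra k (Fin m × Fin m) →ₐ[k]
      (FreeAlgebra k (Fin m × Fin m) ⊗[k] FreeAlgebra k (Fin m × Fin m)) :=
  FreeAlgebra.lift k (fun p : Fin m × Fin m =>
    ∑ l, FreeAlgebra.ι k (p.1, l) ⊗ₜ[k] FreeAlgebra.ι k (l, p.2))

/-- The counit of the free (comatrix) bialgebra on generators `t i j`. -/
noncomputable def freeCounit (k : Type*) [Field k] (m : ℕ) :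
    FreeAlgebra k (Fin m × Fin m) →ₐ[k] k :=
  FreeAlgebra.lift k (fun p : Fin m × Fin m => if p.1 = p.2 then (1 : k) else 0)

/-- The multi-index monomial `t_I^J = t_{i₁j₁} ⋯ t_{iₗjₗ}` in the free bialgebra. -/
noncomputable def tMulti (k : Type*) [Field k] (m ℓ : ℕ)
    (I J : Fin ℓ → Fin m) : FreeAlgebra k (Fin m × Fin m) :=
  (List.ofFn fun a : Fin ℓ => FreeAlgebra.ι k (I a, J a)).prod

namespace Stmt14Aux

variable {k : Type*} [Field k] {m : ℕ}

lemma tMulti_zero (I J : Fin 0 → Fin m) : tMulti k m 0 I J = 1 := by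
  simp [tMulti]

lemma tMulti_succ {ℓ : ℕ} (I J : Fin (ℓ + 1) → Fin m) :
    tMulti k m (ℓ + 1) I J =
      FreeAlgebra.ι k (I 0, J 0) *
        tMulti k m ℓ (fun i => I i.succ) (fun i => J i.succ) := by
  simp [tMulti, List.ofFn_succ]

lemma counit_tMulti {ℓ : ℕ} (I J : Fin ℓ → Fin m) :
    freeCounit k m (tMulti k m ℓ I J) = if I = J then 1 else 0 := by
  rw [tMulti, map_list_prod]
  simp only [List.map_ofFn, Function.comp_def, freeCounit, FreeAlgebra.lift_ι_apply]
  rw [List.prod_ofFn, Finset.prod_boole]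
  simp [funext_iff]

lemma comul_tMulti {ℓ : ℕ} (I J : Fin ℓ → Fin m) :
    freeComul k m (tMulti k m ℓ I J) =
      ∑ L : Fin ℓ → Fin m, tMulti k m ℓ I L ⊗ₜ[k] tMulti k m ℓ L J := by
  induction ℓ with
  | zero => simp [tMulti_zero, Algebra.TensorProduct.one_def]
  | succ ℓ ih =>
      rw [tMulti_succ, map_mul, ih]
      simp only [freeComul, FreeAlgebra.lift_ι_apply]
      rw [← Equiv.sum_comp (Fin.consEquiv (fun _ : Fin (ℓ + 1) => Fin m))
        (fun L => tMulti k m (ℓ + 1) I L ⊗ₜ[k] tMulti k m (ℓ + 1) L J)]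
      rw [Fintype.sum_prod_type, Finset.sum_mul_sum]
      refine Finset.sum_congr rfl fun l _ => Finset.sum_congr rfl fun L' _ => ?_
      simp [Fin.consEquiv, tMulti_succ, Algebra.TensorProduct.tmul_mul_tmul]

end Stmt14Aux

namespace Stmt14Aux
variable {k : Type*} [Field k] {m n₁ n₂ : ℕ}

/-- generator element -/
noncomputable def gel (fc : (Fin n₁ → Fin m) → (Fin n₂ → Fin m) → k)
    (I : Fin n₁ → Fin m) (K : Fin n₂ → Fin m) : FreeAlgebra k (Fin m × Fin m) :=
  (∑ J : Fin n₁ → Fin m, fc J K • tMulti k m n₁ I J) -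
  (∑ J : Fin n₂ → Fin m, fc I J • tMulti k m n₂ J K)

lemma counit_gel (fc : (Fin n₁ → Fin m) → (Fin n₂ → Fin m) → k)
    (I : Fin n₁ → Fin m) (K : Fin n₂ → Fin m) :
    freeCounit k m (gel fc I K) = 0 := by
  simp [gel, counit_tMulti, smul_eq_mul, mul_ite, Finset.sum_ite_eq, Finset.sum_ite_eq']

lemma comul_gel (fc : (Fin n₁ → Fin m) → (Fin n₂ → Fin m) → k)
    (I : Fin n₁ → Fin m) (K : Fin n₂ → Fin m) :
    freeComul k m (gel fc I K) =
      (∑ L : Fin n₁ → Fin m, tMulti k m n₁ I L ⊗ₜ[k] gel fc L K) +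
      ∑ L : Fin n₂ → Fin m, gel fc I L ⊗ₜ[k] tMulti k m n₂ L K := by
  simp only [gel, map_sub, map_sum, map_smul, comul_tMulti, TensorProduct.tmul_sub,
    TensorProduct.sub_tmul, TensorProduct.tmul_sum, TensorProduct.sum_tmul,
    TensorProduct.tmul_smul, TensorProduct.smul_tmul', Finset.smul_sum,
    Finset.sum_sub_distrib]
  rw [Finset.sum_comm (f := fun (x x1 : Fin n₁ → Fin m) =>
      (fc x K • tMulti k m n₁ I x1) ⊗ₜ[k] tMulti k m n₁ x1 x),
    Finset.sum_comm (f := fun (x x1 : Fin n₂ → Fin m) =>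
      (fc I x • tMulti k m n₂ x x1) ⊗ₜ[k] tMulti k m n₂ x1 K),
    Finset.sum_comm (f := fun (x : Fin n₂ → Fin m) (a : Fin n₁ → Fin m) =>
      (fc a x • tMulti k m n₁ I a) ⊗ₜ[k] tMulti k m n₂ x K)]
  abel

end Stmt14Aux

namespace Stmt14Aux
variable {k : Type*} [Field k] {m : ℕ}
variable (If : TwoSidedIdeal (FreeAlgebra k (Fin m × Fin m)))

lemma mem_span_If {x} :
    x ∈ Submodule.span k (If : Set (FreeAlgebra k (Fin m × Fin m))) ↔ x ∈ If := by
  constructor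
  · intro h
    induction h using Submodule.span_induction with
    | mem x hx => exact hx
    | zero => exact If.zero_mem
    | add _ _ _ _ hx hy => exact If.add_mem hx hy
    | smul c x _ hx => rw [Algebra.smul_def]; exact If.mul_mem_left _ _ hx
  · exact fun h => Submodule.subset_span h

noncomputable def rT : (Submodule.span k (If : Set (FreeAlgebra k (Fin m × Fin m)))) ⊗[k]
      FreeAlgebra k (Fin m × Fin m) →ₗ[k]
      FreeAlgebra k (Fin m × Fin m) ⊗[k] FreeAlgebra k (Fin m × Fin m) :=
  (Submodule.span k (If : Set (FreeAlgebra k (Fin m × Fin m)))).subtype.rTensor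
    (FreeAlgebra k (Fin m × Fin m))

noncomputable def lT : FreeAlgebra k (Fin m × Fin m) ⊗[k]
      (Submodule.span k (If : Set (FreeAlgebra k (Fin m × Fin m)))) →ₗ[k]
      FreeAlgebra k (Fin m × Fin m) ⊗[k] FreeAlgebra k (Fin m × Fin m) :=
  (Submodule.span k (If : Set (FreeAlgebra k (Fin m × Fin m)))).subtype.lTensor
    (FreeAlgebra k (Fin m × Fin m))

lemma mulL_rT (u : FreeAlgebra k (Fin m × Fin m) ⊗[k] FreeAlgebra k (Fin m × Fin m)) {v}
    (hv : v ∈ LinearMap.range (rT If)) : u * v ∈ LinearMap.range (rT If) := by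
  obtain ⟨w, rfl⟩ := hv
  induction w using TensorProduct.induction_on with
  | zero => simpa using Submodule.zero_mem _
  | tmul p q =>
      obtain ⟨p, hp⟩ := p
      have hrt : rT If (⟨p, hp⟩ ⊗ₜ[k] q) = p ⊗ₜ[k] q := rfl
      rw [hrt]
      induction u using TensorProduct.induction_on with
      | zero => simpa using Submodule.zero_mem _
      | tmul a b =>
          refine ⟨(⟨a * p, ?_⟩ : Submodule.span k _) ⊗ₜ[k] (b * q), ?_⟩
          · rw [mem_span_If] at hp ⊢
            exact If.mul_mem_left _ _ hp
          · simp [rT, Algebra.TensorProduct.tmul_mul_tmul]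
      | add x y hx hy => rw [add_mul]; exact Submodule.add_mem _ hx hy
  | add x y hx hy =>
      rw [map_add, mul_add]; exact Submodule.add_mem _ hx hy

lemma mulR_rT (u : FreeAlgebra k (Fin m × Fin m) ⊗[k] FreeAlgebra k (Fin m × Fin m)) {v}
    (hv : v ∈ LinearMap.range (rT If)) : v * u ∈ LinearMap.range (rT If) := by
  obtain ⟨w, rfl⟩ := hv
  induction w using TensorProduct.induction_on with
  | zero => simpa using Submodule.zero_mem _
  | tmul p q =>
      obtain ⟨p, hp⟩ := p
      have hrt : rT If (⟨p, hp⟩ ⊗ₜ[k] q) = p ⊗ₜ[k] q := rfl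
      rw [hrt]
      induction u using TensorProduct.induction_on with
      | zero => simpa using Submodule.zero_mem _
      | tmul a b =>
          refine ⟨(⟨p * a, ?_⟩ : Submodule.span k _) ⊗ₜ[k] (q * b), ?_⟩
          · rw [mem_span_If] at hp ⊢
            exact If.mul_mem_right _ _ hp
          · simp [rT, Algebra.TensorProduct.tmul_mul_tmul]
      | add x y hx hy => rw [mul_add]; exact Submodule.add_mem _ hx hy
  | add x y hx hy =>
      rw [map_add, add_mul]; exact Submodule.add_mem _ hx hy

lemma mulL_lT (u : FreeAlgebra k (Fin m × Fin m) ⊗[k] FreeAlgebra k (Fin m × Fin m)) {v}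
    (hv : v ∈ LinearMap.range (lT If)) : u * v ∈ LinearMap.range (lT If) := by
  obtain ⟨w, rfl⟩ := hv
  induction w using TensorProduct.induction_on with
  | zero => simpa using Submodule.zero_mem _
  | tmul p q =>
      obtain ⟨q, hq⟩ := q
      have hrt : lT If (p ⊗ₜ[k] ⟨q, hq⟩) = p ⊗ₜ[k] q := rfl
      rw [hrt]
      induction u using TensorProduct.induction_on with
      | zero => simpa using Submodule.zero_mem _
      | tmul a b =>
          refine ⟨(a * p) ⊗ₜ[k] (⟨b * q, ?_⟩ : Submodule.span k _), ?_⟩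
          · rw [mem_span_If] at hq ⊢
            exact If.mul_mem_left _ _ hq
          · simp [lT, Algebra.TensorProduct.tmul_mul_tmul]
      | add x y hx hy => rw [add_mul]; exact Submodule.add_mem _ hx hy
  | add x y hx hy =>
      rw [map_add, mul_add]; exact Submodule.add_mem _ hx hy

lemma mulR_lT (u : FreeAlgebra k (Fin m × Fin m) ⊗[k] FreeAlgebra k (Fin m × Fin m)) {v}
    (hv : v ∈ LinearMap.range (lT If)) : v * u ∈ LinearMap.range (lT If) := by
  obtain ⟨w, rfl⟩ := hv
  induction w using TensorProduct.induction_on with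
  | zero => simpa using Submodule.zero_mem _
  | tmul p q =>
      obtain ⟨q, hq⟩ := q
      have hrt : lT If (p ⊗ₜ[k] ⟨q, hq⟩) = p ⊗ₜ[k] q := rfl
      rw [hrt]
      induction u using TensorProduct.induction_on with
      | zero => simpa using Submodule.zero_mem _
      | tmul a b =>
          refine ⟨(p * a) ⊗ₜ[k] (⟨q * b, ?_⟩ : Submodule.span k _), ?_⟩
          · rw [mem_span_If] at hq ⊢
            exact If.mul_mem_right _ _ hq
          · simp [lT, Algebra.TensorProduct.tmul_mul_tmul]
      | add x y hx hy => rw [mul_add]; exact Submodule.add_mem _ hx hy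
  | add x y hx hy =>
      rw [map_add, add_mul]; exact Submodule.add_mem _ hx hy

lemma M_mul_left (u : FreeAlgebra k (Fin m × Fin m) ⊗[k] FreeAlgebra k (Fin m × Fin m)) {v}
    (hv : v ∈ LinearMap.range (rT If) ⊔ LinearMap.range (lT If)) :
    u * v ∈ LinearMap.range (rT If) ⊔ LinearMap.range (lT If) := by
  obtain ⟨a, ha, b, hb, rfl⟩ := Submodule.mem_sup.mp hv
  rw [mul_add]
  exact Submodule.add_mem _ (Submodule.mem_sup_left (mulL_rT If u ha))
    (Submodule.mem_sup_right (mulL_lT If u hb))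

lemma M_mul_right (u : FreeAlgebra k (Fin m × Fin m) ⊗[k] FreeAlgebra k (Fin m × Fin m)) {v}
    (hv : v ∈ LinearMap.range (rT If) ⊔ LinearMap.range (lT If)) :
    v * u ∈ LinearMap.range (rT If) ⊔ LinearMap.range (lT If) := by
  obtain ⟨a, ha, b, hb, rfl⟩ := Submodule.mem_sup.mp hv
  rw [add_mul]
  exact Submodule.add_mem _ (Submodule.mem_sup_left (mulR_rT If u ha))
    (Submodule.mem_sup_right (mulR_lT If u hb))

end Stmt14Aux

/-- The two-sided ideal `I_f` generated by `∑_J (t_I^J f_J^K − f_I^J t_J^K)` is a coideal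
of the free bialgebra: `Δ(I_f) ⊆ I_f ⊗ F + F ⊗ I_f` and `ε(I_f) = 0`.  Hence the quotient
`A(f) = F/I_f` inherits a bialgebra structure. -/
theorem stmt14 {k : Type*} [Field k] (m n₁ n₂ : ℕ)
    (fc : (Fin n₁ → Fin m) → (Fin n₂ → Fin m) → k)
    (If : TwoSidedIdeal (FreeAlgebra k (Fin m × Fin m)))
    (hIf : If = TwoSidedIdeal.span
      {x | ∃ (I : Fin n₁ → Fin m) (K : Fin n₂ → Fin m), x =
        (∑ J : Fin n₁ → Fin m, fc J K • tMulti k m n₁ I J) -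
        (∑ J : Fin n₂ → Fin m, fc I J • tMulti k m n₂ J K)}) :
    (∀ x ∈ If, freeComul k m x ∈
      LinearMap.range
        ((Submodule.span k (If : Set (FreeAlgebra k (Fin m × Fin m)))).subtype.rTensor
          (FreeAlgebra k (Fin m × Fin m))) ⊔
      LinearMap.range
        ((Submodule.span k (If : Set (FreeAlgebra k (Fin m × Fin m)))).subtype.lTensor
          (FreeAlgebra k (Fin m × Fin m)))) ∧
    (∀ x ∈ If, freeCounit k m x = 0) := by
  classical
  open Stmt14Aux in
  have key : ∀ x ∈ If, freeComul k m x ∈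
      LinearMap.range (rT If) ⊔ LinearMap.range (lT If) ∧ freeCounit k m x = 0 := by
    intro x hx
    have hx' := hIf ▸ hx
    rw [TwoSidedIdeal.mem_span_iff] at hx'
    have := hx' (TwoSidedIdeal.mk'
      {x | freeComul k m x ∈ LinearMap.range (rT If) ⊔ LinearMap.range (lT If) ∧
        freeCounit k m x = 0}
      ⟨by rw [map_zero]; exact Submodule.zero_mem _, map_zero _⟩
      (fun {a b} ha hb => ⟨by rw [map_add]; exact Submodule.add_mem _ ha.1 hb.1,
        by rw [map_add, ha.2, hb.2, add_zero]⟩)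
      (fun {a} ha => ⟨by rw [map_neg]; exact Submodule.neg_mem _ ha.1,
        by rw [map_neg, ha.2, neg_zero]⟩)
      (fun {a b} hb => ⟨by rw [map_mul]; exact M_mul_left If _ hb.1,
        by rw [map_mul, hb.2, mul_zero]⟩)
      (fun {a b} ha => ⟨by rw [map_mul]; exact M_mul_right If _ ha.1,
        by rw [map_mul, ha.2, zero_mul]⟩)) ?_
    · rwa [TwoSidedIdeal.mem_mk'] at this
    · rintro y ⟨I, K, rfl⟩
      simp only [SetLike.mem_coe, TwoSidedIdeal.mem_mk']
      have hmem : ∀ (I : Fin n₁ → Fin m) (K : Fin n₂ → Fin m),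
          gel fc I K ∈ Submodule.span k (If : Set (FreeAlgebra k (Fin m × Fin m))) :=
        fun I K => (mem_span_If If).mpr
          (by rw [hIf]; exact TwoSidedIdeal.subset_span ⟨I, K, rfl⟩)
      refine ⟨?_, ?_⟩
      · rw [show (∑ J : Fin n₁ → Fin m, fc J K • tMulti k m n₁ I J) -
            (∑ J : Fin n₂ → Fin m, fc I J • tMulti k m n₂ J K) = gel fc I K from rfl,
          comul_gel]
        refine Submodule.add_mem _ (Submodule.mem_sup_right (Submodule.sum_mem _
          fun L _ => ⟨tMulti k m n₁ I L ⊗ₜ[k] ⟨gel fc L K, hmem L K⟩, rfl⟩))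
          (Submodule.mem_sup_left (Submodule.sum_mem _
          fun L _ => ⟨(⟨gel fc I L, hmem I L⟩ : Submodule.span k _) ⊗ₜ[k] tMulti k m n₂ L K,
            rfl⟩))
      · rw [show (∑ J : Fin n₁ → Fin m, fc J K • tMulti k m n₁ I J) -
            (∑ J : Fin n₂ → Fin m, fc I J • tMulti k m n₂ J K) = gel fc I K from rfl]
        exact counit_gel fc I K
  exact ⟨fun x hx => (key x hx).1, fun x hx => (key x hx).2⟩
end

section
/- Let A be a bialgebra over a field k and D ∈ A a group-like element. Then the Ore-free localization A[D⁻¹] (the pushout of algebras A ⟶ A ⊔ k⟨D⁻¹⟩ / (DD⁻¹ = 1 = D⁻¹D)) carries a unique bialgebra structure such that the canonical map A → A[D⁻¹] is a bialgebra morphism and D⁻¹ is group-like. -/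
/-!
The comultiplication and counit of `A[D⁻¹]` are produced by the universal property from
`(φ ⊗ φ) ∘ Δ_A` with `D⁻¹ ↦ D⁻¹ ⊗ D⁻¹` and from `ε_A` with `D⁻¹ ↦ 1`; these are legal because
`D` is group-like. Each coalgebra axiom is an identity between algebra maps out of `A[D⁻¹]`, so by
the uniqueness half of the universal property it suffices to check it on `φ(A)`, where it is the
corresponding axiom of `A`, and on `D⁻¹`, which is group-like. Uniqueness is the same argument.
-/

open TensorProduct

section Intertwining

open LinearMap

variable {k A L : Type*} [CommSemiring k] [AddCommMonoid A] [Module k A] [Coalgebra k A]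
  [AddCommMonoid L] [Module k L] {φ : A →ₗ[k] L} {Δ : L →ₗ[k] L ⊗[k] L} {ε : L →ₗ[k] k}

theorem coassoc_comp_of_intertwines (hΔ : Δ ∘ₗ φ = map φ φ ∘ₗ Coalgebra.comul) :
    TensorProduct.assoc k L L L ∘ₗ Δ.rTensor L ∘ₗ Δ ∘ₗ φ = Δ.lTensor L ∘ₗ Δ ∘ₗ φ := by
  have hr : Δ.rTensor L ∘ₗ map φ φ = map (map φ φ) φ ∘ₗ Coalgebra.comul.rTensor A := by
    rw [rTensor_comp_map, hΔ, map_comp_rTensor]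
  have hl : Δ.lTensor L ∘ₗ map φ φ = map φ (map φ φ) ∘ₗ Coalgebra.comul.lTensor A := by
    rw [lTensor_comp_map, hΔ, map_comp_lTensor]
  calc _ = TensorProduct.assoc k L L L ∘ₗ map (map φ φ) φ ∘ₗ
          Coalgebra.comul.rTensor A ∘ₗ Coalgebra.comul := by
        rw [hΔ, ← comp_assoc _ (map φ φ), hr, comp_assoc]
    _ = map φ (map φ φ) ∘ₗ TensorProduct.assoc k A A A ∘ₗ
          Coalgebra.comul.rTensor A ∘ₗ Coalgebra.comul := by
        rw [← comp_assoc _ (map _ φ), ← map_map_comp_assoc_eq, comp_assoc]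
    _ = map φ (map φ φ) ∘ₗ Coalgebra.comul.lTensor A ∘ₗ Coalgebra.comul := by
        rw [Coalgebra.coassoc]
    _ = Δ.lTensor L ∘ₗ Δ ∘ₗ φ := by
        rw [hΔ, ← comp_assoc _ (map φ φ), hl, comp_assoc]

theorem lid_rTensor_comp_of_intertwines (hΔ : Δ ∘ₗ φ = map φ φ ∘ₗ Coalgebra.comul)
    (hε : ε ∘ₗ φ = Coalgebra.counit) :
    TensorProduct.lid k L ∘ₗ ε.rTensor L ∘ₗ Δ ∘ₗ φ = φ := by
  ext a
  have h := congr($hΔ a)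
  simp only [comp_apply] at h ⊢
  rw [h, ← comp_apply (rTensor L ε), rTensor_comp_map, hε, ← lTensor_comp_rTensor, comp_apply,
    Coalgebra.rTensor_counit_comul]
  simp

theorem rid_lTensor_comp_of_intertwines (hΔ : Δ ∘ₗ φ = map φ φ ∘ₗ Coalgebra.comul)
    (hε : ε ∘ₗ φ = Coalgebra.counit) :
    TensorProduct.rid k L ∘ₗ ε.lTensor L ∘ₗ Δ ∘ₗ φ = φ := by
  ext a
  have h := congr($hΔ a)
  simp only [comp_apply] at h ⊢
  rw [h, ← comp_apply (lTensor L ε), lTensor_comp_map, hε, ← rTensor_comp_lTensor, comp_apply,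
    Coalgebra.lTensor_counit_comul]
  simp

end Intertwining

structure IsFreeLocalization {k A L : Type} [CommSemiring k] [Ring A] [Algebra k A] [Ring L]
    [Algebra k L] (φ : A →ₐ[k] L) (D : A) (Dinv : L) : Prop where
  mul_inv : φ D * Dinv = 1
  inv_mul : Dinv * φ D = 1
  existsUnique_lift : ∀ (B : Type) [Ring B] [Algebra k B] (ψ : A →ₐ[k] B) (e : B),
    ψ D * e = 1 → e * ψ D = 1 → ∃! χ : L →ₐ[k] B, χ.comp φ = ψ ∧ χ Dinv = e

namespace IsFreeLocalization

variable {k A L : Type} [CommSemiring k] [Ring A] [Algebra k A] [Ring L] [Algebra k L]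
  {φ : A →ₐ[k] L} {D : A} {Dinv : L}

theorem algHom_ext (hL : IsFreeLocalization φ D Dinv) {B : Type} [Ring B] [Algebra k B]
    {χ χ' : L →ₐ[k] B} (h : χ.comp φ = χ'.comp φ) (hD : χ Dinv = χ' Dinv) : χ = χ' := by
  have hmul : χ.comp φ D * χ Dinv = 1 := by simp [← map_mul, hL.mul_inv]
  have hmul' : χ Dinv * χ.comp φ D = 1 := by simp [← map_mul, hL.inv_mul]
  exact (hL.existsUnique_lift B _ _ hmul hmul').unique ⟨rfl, rfl⟩ ⟨h.symm, hD.symm⟩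

variable [Coalgebra k A] {Δ : L →ₐ[k] L ⊗[k] L} {ε : L →ₐ[k] k}

theorem coassoc (hL : IsFreeLocalization φ D Dinv)
    (hΔ : Δ.toLinearMap ∘ₗ φ.toLinearMap = map φ.toLinearMap φ.toLinearMap ∘ₗ Coalgebra.comul)
    (hΔD : Δ Dinv = Dinv ⊗ₜ Dinv) :
    TensorProduct.assoc k L L L ∘ₗ Δ.toLinearMap.rTensor L ∘ₗ Δ.toLinearMap =
      Δ.toLinearMap.lTensor L ∘ₗ Δ.toLinearMap := by
  have := hL.algHom_ext
    (χ := (Algebra.TensorProduct.assoc k k k L L L).toAlgHom.comp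
      ((Algebra.TensorProduct.rTensor L Δ).comp Δ))
    (χ' := (Algebra.TensorProduct.lTensor L Δ).comp Δ) ?_ ?_
  · exact congrArg AlgHom.toLinearMap this
  · exact AlgHom.toLinearMap_injective (coassoc_comp_of_intertwines hΔ)
  · simp [hΔD]

theorem lid_rTensor_counit (hL : IsFreeLocalization φ D Dinv)
    (hΔ : Δ.toLinearMap ∘ₗ φ.toLinearMap = map φ.toLinearMap φ.toLinearMap ∘ₗ Coalgebra.comul)
    (hε : ε.toLinearMap ∘ₗ φ.toLinearMap = Coalgebra.counit)
    (hΔD : Δ Dinv = Dinv ⊗ₜ Dinv) (hεD : ε Dinv = 1) :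
    TensorProduct.lid k L ∘ₗ ε.toLinearMap.rTensor L ∘ₗ Δ.toLinearMap = LinearMap.id := by
  have := hL.algHom_ext
    (χ := (Algebra.TensorProduct.lid k L).toAlgHom.comp
      ((Algebra.TensorProduct.rTensor L ε).comp Δ))
    (χ' := AlgHom.id k L) ?_ ?_
  · exact congrArg AlgHom.toLinearMap this
  · exact AlgHom.toLinearMap_injective (lid_rTensor_comp_of_intertwines hΔ hε)
  · simp [hΔD, hεD]

theorem rid_lTensor_counit (hL : IsFreeLocalization φ D Dinv)
    (hΔ : Δ.toLinearMap ∘ₗ φ.toLinearMap = map φ.toLinearMap φ.toLinearMap ∘ₗ Coalgebra.comul)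
    (hε : ε.toLinearMap ∘ₗ φ.toLinearMap = Coalgebra.counit)
    (hΔD : Δ Dinv = Dinv ⊗ₜ Dinv) (hεD : ε Dinv = 1) :
    TensorProduct.rid k L ∘ₗ ε.toLinearMap.lTensor L ∘ₗ Δ.toLinearMap = LinearMap.id := by
  have := hL.algHom_ext
    (χ := (Algebra.TensorProduct.rid k k L).toAlgHom.comp
      ((Algebra.TensorProduct.lTensor L ε).comp Δ))
    (χ' := AlgHom.id k L) ?_ ?_
  · exact congrArg AlgHom.toLinearMap this
  · exact AlgHom.toLinearMap_injective (rid_lTensor_comp_of_intertwines hΔ hε)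
  · simp [hΔD, hεD]

end IsFreeLocalization

/-- Let `A` be a bialgebra, `D ∈ A` group-like, and let `(L, φ, Dinv)` be the Ore-free
localization `A[D⁻¹]`, i.e. `φ D * Dinv = 1 = Dinv * φ D` and the universal property among
`k`-algebras holds.  Then `L` carries a unique bialgebra structure (an algebra-map
comultiplication and counit) such that `φ` is a bialgebra morphism and `Dinv` is
group-like. -/
theorem stmt16 {k : Type} [Field k] {A : Type} [Ring A] [Bialgebra k A]
    (D : A) (hD : Coalgebra.comul (R := k) D = D ⊗ₜ[k] D)
    (hDε : Coalgebra.counit (R := k) D = 1)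
    (L : Type) [Ring L] [Algebra k L] (φ : A →ₐ[k] L) (Dinv : L)
    (hinv₁ : φ D * Dinv = 1) (hinv₂ : Dinv * φ D = 1)
    (huniv : ∀ (B : Type) [Ring B] [Algebra k B] (ψ : A →ₐ[k] B) (e : B),
      ψ D * e = 1 → e * ψ D = 1 →
      ∃! χ : L →ₐ[k] B, χ.comp φ = ψ ∧ χ Dinv = e) :
    ∃! p : (L →ₐ[k] (L ⊗[k] L)) × (L →ₐ[k] k),
      -- coassociativity
      ((TensorProduct.assoc k L L L).toLinearMap ∘ₗ
          p.1.toLinearMap.rTensor L ∘ₗ p.1.toLinearMap =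
        p.1.toLinearMap.lTensor L ∘ₗ p.1.toLinearMap) ∧
      -- counit axioms
      ((TensorProduct.lid k L).toLinearMap ∘ₗ
          p.2.toLinearMap.rTensor L ∘ₗ p.1.toLinearMap = LinearMap.id) ∧
      ((TensorProduct.rid k L).toLinearMap ∘ₗ
          p.2.toLinearMap.lTensor L ∘ₗ p.1.toLinearMap = LinearMap.id) ∧
      -- `φ` is a morphism of bialgebras
      (∀ a : A, p.1 (φ a) =
        Algebra.TensorProduct.map φ φ (Coalgebra.comul (R := k) a)) ∧
      (∀ a : A, p.2 (φ a) = Coalgebra.counit (R := k) a) ∧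
      -- `Dinv` is group-like
      p.1 Dinv = Dinv ⊗ₜ[k] Dinv ∧ p.2 Dinv = 1 := by
  have hL : IsFreeLocalization φ D Dinv := ⟨hinv₁, hinv₂, huniv⟩
  obtain ⟨Δ, ⟨hΔ, hΔD⟩, -⟩ := hL.existsUnique_lift _
    ((Algebra.TensorProduct.map φ φ).comp (Bialgebra.comulAlgHom k A)) (Dinv ⊗ₜ Dinv)
    (by simp [hD, hinv₁, Algebra.TensorProduct.one_def])
    (by simp [hD, hinv₂, Algebra.TensorProduct.one_def])
  obtain ⟨ε, ⟨hε, hεD⟩, -⟩ := hL.existsUnique_lift k (Bialgebra.counitAlgHom k A) 1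
    (by simp [hDε]) (by simp [hDε])
  have hΔ' := congrArg AlgHom.toLinearMap hΔ
  have hε' := congrArg AlgHom.toLinearMap hε
  refine ⟨(Δ, ε), ⟨hL.coassoc hΔ' hΔD, hL.lid_rTensor_counit hΔ' hε' hΔD hεD,
    hL.rid_lTensor_counit hΔ' hε' hΔD hεD, fun a => congr($hΔ a), fun a => congr($hε a),
    hΔD, hεD⟩, ?_⟩
  rintro ⟨Δ', ε'⟩ ⟨-, -, -, hΔ'φ, hε'φ, hΔ'D, hε'D⟩
  refine Prod.ext (hL.algHom_ext ?_ (hΔ'D.trans hΔD.symm))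
    (hL.algHom_ext ?_ (hε'D.trans hεD.symm))
  · exact AlgHom.ext fun a => (hΔ'φ a).trans congr($hΔ a).symm
  · exact AlgHom.ext fun a => (hε'φ a).trans congr($hε a).symm
end

section
/- Let k be a field, B ∈ GL_n(k), and consider the Dubois-Violette–Launer algebra H(B): the k-algebra with generators t_{ij} and relations (in matrix form) 𝐭 B 𝐭^tr = B and 𝐭^tr B⁻¹ 𝐭 = B⁻¹. Then the map S determined on generators by S(𝐭) = B 𝐭^tr B⁻¹ extends to an algebra anti-endomorphism of H(B), and H(B) with Δ(t_{ij}) = ∑_k t_{ik} ⊗ t_{kj}, ε(t_{ij}) = δ_{ij} is a Hopf algebra with antipode S. -/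
open scoped TensorProduct

/-- The defining relations of the Dubois-Violette–Launer algebra `H(B)`:
`𝐭 B 𝐭ᵀ = B` and `𝐭ᵀ B⁻¹ 𝐭 = B⁻¹`. -/
inductive dvlRel {k : Type*} [Field k] {n : ℕ} (B : Matrix (Fin n) (Fin n) k) :
    FreeAlgebra k (Fin n × Fin n) → FreeAlgebra k (Fin n × Fin n) → Prop
  | rel1 (lam rho : Fin n) : dvlRel B
      (∑ mu, ∑ nu, B mu nu • (FreeAlgebra.ι k (lam, mu) * FreeAlgebra.ι k (rho, nu)))
      (algebraMap k _ (B lam rho))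
  | rel2 (lam rho : Fin n) : dvlRel B
      (∑ mu, ∑ nu, B⁻¹ mu nu • (FreeAlgebra.ι k (mu, lam) * FreeAlgebra.ι k (nu, rho)))
      (algebraMap k _ (B⁻¹ lam rho))

/-- The Dubois-Violette–Launer algebra `H(B)`. -/
abbrev dvlAlgebra {k : Type*} [Field k] {n : ℕ} (B : Matrix (Fin n) (Fin n) k) :=
  RingQuot (dvlRel B)

/-- The generators `t i j` of `H(B)`. -/
noncomputable def dvlT {k : Type*} [Field k] {n : ℕ} (B : Matrix (Fin n) (Fin n) k)
    (i j : Fin n) : dvlAlgebra B :=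
  RingQuot.mkAlgHom k (dvlRel B) (FreeAlgebra.ι k (i, j))

open Matrix

namespace DVLaux

variable {k : Type*} [Field k] {n : ℕ} (B : Matrix (Fin n) (Fin n) k)

/-- The matrix of generators. -/
noncomputable def Tm : Matrix (Fin n) (Fin n) (dvlAlgebra B) := Matrix.of (dvlT B)

/-- The antipode matrix `B 𝐭ᵀ B⁻¹`. -/
noncomputable def Sm : Matrix (Fin n) (Fin n) (dvlAlgebra B) :=
  B.map (algebraMap k (dvlAlgebra B)) * (Matrix.of (dvlT B)).transpose *
    (B⁻¹).map (algebraMap k (dvlAlgebra B))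

lemma conv1 {R : Type*} [Semiring R] [Algebra k R] (u v : Matrix (Fin n) (Fin n) R)
    (C : Matrix (Fin n) (Fin n) k) (l r : Fin n) :
    ∑ μ, ∑ ν, C μ ν • (u l μ * v r ν) = (u * C.map (algebraMap k R) * vᵀ) l r := by
  simp only [Matrix.mul_apply, Matrix.transpose_apply, Matrix.map_apply, Finset.sum_mul]
  rw [Finset.sum_comm]
  refine Finset.sum_congr rfl fun μ _ => Finset.sum_congr rfl fun ν _ => ?_
  rw [Algebra.smul_def, ← mul_assoc, Algebra.commutes]

lemma conv2 {R : Type*} [Semiring R] [Algebra k R] (u v : Matrix (Fin n) (Fin n) R)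
    (C : Matrix (Fin n) (Fin n) k) (l r : Fin n) :
    ∑ μ, ∑ ν, C μ ν • (u μ l * v ν r) = (uᵀ * C.map (algebraMap k R) * v) l r := by
  simpa using conv1 uᵀ vᵀ C l r

lemma trel1 (lam rho : Fin n) :
    ∑ μ, ∑ ν, B μ ν • (dvlT B lam μ * dvlT B rho ν)
      = algebraMap k (dvlAlgebra B) (B lam rho) := by
  have h := RingQuot.mkAlgHom_rel k (dvlRel.rel1 (B := B) lam rho)
  simpa only [map_sum, _root_.map_smul, _root_.map_mul, AlgHom.commutes, dvlT] using h

lemma trel2 (lam rho : Fin n) :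
    ∑ μ, ∑ ν, B⁻¹ μ ν • (dvlT B μ lam * dvlT B ν rho)
      = algebraMap k (dvlAlgebra B) (B⁻¹ lam rho) := by
  have h := RingQuot.mkAlgHom_rel k (dvlRel.rel2 (B := B) lam rho)
  simpa only [map_sum, _root_.map_smul, _root_.map_mul, AlgHom.commutes, dvlT] using h

lemma M1 : Tm B * B.map (algebraMap k (dvlAlgebra B)) * (Tm B)ᵀ
    = B.map (algebraMap k (dvlAlgebra B)) := by
  ext lam rho
  rw [← conv1]
  simpa [Tm, Matrix.map_apply] using trel1 B lam rho

lemma M2 : (Tm B)ᵀ * (B⁻¹).map (algebraMap k (dvlAlgebra B)) * Tm B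
    = (B⁻¹).map (algebraMap k (dvlAlgebra B)) := by
  ext lam rho
  rw [← conv2]
  simpa [Tm, Matrix.map_apply] using trel2 B lam rho

end DVLaux

namespace DVLaux
variable {k : Type*} [Field k] {n : ℕ} (B : Matrix (Fin n) (Fin n) k)

lemma hdet (hB : IsUnit B) : IsUnit B.det := (isUnit_iff_isUnit_det B).mp hB
lemma kBBi (hB : IsUnit B) : B * B⁻¹ = 1 := B.mul_nonsing_inv (hdet B hB)
lemma kBiB (hB : IsUnit B) : B⁻¹ * B = 1 := B.nonsing_inv_mul (hdet B hB)

lemma kid1 (hB : IsUnit B) : B⁻¹ * Bᵀ * (B⁻¹)ᵀ = B⁻¹ := by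
  rw [transpose_nonsing_inv, mul_assoc,
    Matrix.mul_nonsing_inv _ (isUnit_det_transpose B (hdet B hB)), mul_one]

lemma kid2 (hB : IsUnit B) : Bᵀ * (B⁻¹)ᵀ * B = B := by
  rw [← transpose_mul, kBiB B hB, transpose_one, one_mul]

section Helpers
variable {R : Type*} [Semiring R] [Algebra k R]

lemma mg (C D : Matrix (Fin n) (Fin n) k) (X : Matrix (Fin n) (Fin n) R) :
    C.map (algebraMap k R) * (D.map (algebraMap k R) * X)
      = (C * D).map (algebraMap k R) * X := by
  rw [Matrix.map_mul, mul_assoc]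

lemma mg' (C D : Matrix (Fin n) (Fin n) k) :
    C.map (algebraMap k R) * D.map (algebraMap k R) = (C * D).map (algebraMap k R) :=
  (Matrix.map_mul).symm

lemma mapone : (1 : Matrix (Fin n) (Fin n) k).map (algebraMap k R) = 1 :=
  Matrix.map_one _ (map_zero _) (map_one _)

lemma transpose_smap_mul (C : Matrix (Fin n) (Fin n) k) (X : Matrix (Fin n) (Fin n) R) :
    (C.map (algebraMap k R) * X)ᵀ = Xᵀ * Cᵀ.map (algebraMap k R) := by
  ext i j
  simp only [Matrix.transpose_apply, Matrix.mul_apply, Matrix.map_apply]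
  exact Finset.sum_congr rfl fun x _ => (Algebra.commutes _ _)

lemma transpose_mul_smap (C : Matrix (Fin n) (Fin n) k) (X : Matrix (Fin n) (Fin n) R) :
    (X * C.map (algebraMap k R))ᵀ = Cᵀ.map (algebraMap k R) * Xᵀ := by
  ext i j
  simp only [Matrix.transpose_apply, Matrix.mul_apply, Matrix.map_apply]
  exact Finset.sum_congr rfl fun x _ => (Algebra.commutes _ _).symm

end Helpers

-- abbreviations
local notation "f" => algebraMap k (dvlAlgebra B)
local notation "Bm" => Matrix.map B (algebraMap k (dvlAlgebra B))
local notation "Bim" => Matrix.map B⁻¹ (algebraMap k (dvlAlgebra B))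
local notation "Btm" => Matrix.map Bᵀ (algebraMap k (dvlAlgebra B))
local notation "Bitm" => Matrix.map (B⁻¹)ᵀ (algebraMap k (dvlAlgebra B))

lemma h1 (X : Matrix (Fin n) (Fin n) (dvlAlgebra B)) :
    Tm B * (Bm * ((Tm B)ᵀ * X)) = Bm * X := by
  rw [← mul_assoc, ← mul_assoc, M1]

lemma h1' : Tm B * (Bm * (Tm B)ᵀ) = Bm := by rw [← mul_assoc, M1]

lemma h2 (X : Matrix (Fin n) (Fin n) (dvlAlgebra B)) :
    (Tm B)ᵀ * (Bim * (Tm B * X)) = Bim * X := by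
  rw [← mul_assoc, ← mul_assoc, M2]

lemma h2' : (Tm B)ᵀ * (Bim * Tm B) = Bim := by rw [← mul_assoc, M2]

lemma Sm_eq : Sm B = Bm * (Tm B)ᵀ * Bim := rfl

lemma Sm_transpose : (Sm B)ᵀ = Bitm * (Tm B * Btm) := by
  rw [Sm_eq, transpose_mul_smap, transpose_smap_mul, transpose_transpose]

lemma idIII (hB : IsUnit B) : Sm B * Tm B = 1 := by
  rw [Sm_eq, mul_assoc, mul_assoc, h2', mg', kBBi B hB, mapone]

lemma idIV (hB : IsUnit B) : Tm B * Sm B = 1 := by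
  rw [Sm_eq, ← mul_assoc, ← mul_assoc, M1, mg', kBBi B hB, mapone]

lemma idI (hB : IsUnit B) : Sm B * Btm * (Sm B)ᵀ = Btm := by
  rw [Sm_transpose, Sm_eq]
  rw [mul_assoc, mul_assoc, mul_assoc, mg B⁻¹ Bᵀ, mg (B⁻¹ * Bᵀ) (B⁻¹)ᵀ, kid1 B hB]
  rw [h2, mg B B⁻¹, kBBi B hB, mapone, one_mul]

lemma idII (hB : IsUnit B) : (Sm B)ᵀ * Bitm * Sm B = Bitm := by
  rw [Sm_transpose, Sm_eq]
  rw [mul_assoc, mul_assoc, mul_assoc, mul_assoc, mg Bᵀ (B⁻¹)ᵀ, mg (Bᵀ * (B⁻¹)ᵀ) B, kid2 B hB]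
  rw [h1, mg (B⁻¹)ᵀ B, mg', mul_assoc, kBBi B hB, mul_one]

end DVLaux

namespace DVLaux
variable {k : Type*} [Field k] {n : ℕ} (B : Matrix (Fin n) (Fin n) k)

local notation "𝔸" => dvlAlgebra B

/-- The counit. -/
noncomputable def dvlEps : dvlAlgebra B →ₐ[k] k :=
  RingQuot.liftAlgHom k ⟨FreeAlgebra.lift k fun p => if p.1 = p.2 then (1:k) else 0, by
    intro x y h
    induction h with
    | rel1 lam rho =>
        simp [map_sum, _root_.map_smul, _root_.map_mul, FreeAlgebra.lift_ι_apply,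
          mul_ite, ite_mul, Finset.sum_ite_eq, smul_eq_mul]
    | rel2 lam rho =>
        simp [map_sum, _root_.map_smul, _root_.map_mul, FreeAlgebra.lift_ι_apply,
          mul_ite, ite_mul, Finset.sum_ite_eq', smul_eq_mul]⟩

lemma dvlEps_t (i j : Fin n) : dvlEps B (dvlT B i j) = if i = j then 1 else 0 := by
  simp [dvlEps, dvlT, RingQuot.liftAlgHom_mkAlgHom_apply, FreeAlgebra.lift_ι_apply]

end DVLaux

namespace DVLaux
variable {k : Type*} [Field k] {n : ℕ} (B : Matrix (Fin n) (Fin n) k)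

section MapHelpers
variable {R S : Type*} [Semiring R] [Semiring S] [Algebra k R] [Algebra k S]

lemma map_matmulA (g : R →ₐ[k] S) (M N : Matrix (Fin n) (Fin n) R) :
    (M * N).map g = M.map g * N.map g := by
  ext i j
  simp [Matrix.mul_apply, map_sum, _root_.map_mul]

lemma map_smap (g : R →ₐ[k] S) (C : Matrix (Fin n) (Fin n) k) :
    (C.map (algebraMap k R)).map g = C.map (algebraMap k S) := by
  ext i j
  simp [Matrix.map_apply, AlgHom.commutes]

lemma map3assoc (g : R →ₐ[k] S) (M N P : Matrix (Fin n) (Fin n) R)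
    (X : Matrix (Fin n) (Fin n) S) :
    M.map g * (N.map g * (P.map g * X)) = (M * N * P).map g * X := by
  rw [map_matmulA, map_matmulA, mul_assoc, mul_assoc]

lemma map3 (g : R →ₐ[k] S) (M N P : Matrix (Fin n) (Fin n) R) :
    M.map g * (N.map g * P.map g) = (M * N * P).map g := by
  rw [map_matmulA, map_matmulA, mul_assoc]

end MapHelpers

noncomputable abbrev incL : dvlAlgebra B →ₐ[k] dvlAlgebra B ⊗[k] dvlAlgebra B :=
  Algebra.TensorProduct.includeLeft

noncomputable abbrev incR : dvlAlgebra B →ₐ[k] dvlAlgebra B ⊗[k] dvlAlgebra B :=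
  Algebra.TensorProduct.includeRight

/-- The comultiplication matrix. -/
noncomputable def TT : Matrix (Fin n) (Fin n) (dvlAlgebra B ⊗[k] dvlAlgebra B) :=
  (Tm B).map (incL B) * (Tm B).map (incR B)

lemma TT_apply (i j : Fin n) : TT B i j = ∑ l, dvlT B i l ⊗ₜ[k] dvlT B l j := by
  simp [TT, Matrix.mul_apply, Matrix.map_apply, Tm,
    Algebra.TensorProduct.includeLeft_apply, Algebra.TensorProduct.includeRight_apply,
    Algebra.TensorProduct.tmul_mul_tmul]

lemma TT_transpose : (TT B)ᵀ = ((Tm B)ᵀ).map (incR B) * ((Tm B)ᵀ).map (incL B) := by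
  ext i j
  simp [TT, Matrix.mul_apply, Matrix.map_apply, Matrix.transpose_apply,
    Algebra.TensorProduct.includeLeft_apply, Algebra.TensorProduct.includeRight_apply,
    Algebra.TensorProduct.tmul_mul_tmul]

set_option maxHeartbeats 1000000 in
lemma MTT1 : TT B * B.map (algebraMap k (dvlAlgebra B ⊗[k] dvlAlgebra B)) * (TT B)ᵀ
    = B.map (algebraMap k (dvlAlgebra B ⊗[k] dvlAlgebra B)) := by
  have e1 : B.map (algebraMap k (dvlAlgebra B ⊗[k] dvlAlgebra B))
      = (B.map (algebraMap k (dvlAlgebra B))).map (incL B) := (map_smap (incL B) B).symm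
  have e2 : B.map (algebraMap k (dvlAlgebra B ⊗[k] dvlAlgebra B))
      = (B.map (algebraMap k (dvlAlgebra B))).map (incR B) := (map_smap (incR B) B).symm
  rw [TT_transpose, TT, e2]
  simp only [mul_assoc]
  rw [map3assoc (incR B), M1, ← e2, e1, map3 (incL B), M1]

set_option maxHeartbeats 1000000 in
lemma MTT2 : (TT B)ᵀ * (B⁻¹).map (algebraMap k (dvlAlgebra B ⊗[k] dvlAlgebra B)) * TT B
    = (B⁻¹).map (algebraMap k (dvlAlgebra B ⊗[k] dvlAlgebra B)) := by
  have e1 : (B⁻¹).map (algebraMap k (dvlAlgebra B ⊗[k] dvlAlgebra B))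
      = ((B⁻¹).map (algebraMap k (dvlAlgebra B))).map (incL B) := (map_smap (incL B) B⁻¹).symm
  have e2 : (B⁻¹).map (algebraMap k (dvlAlgebra B ⊗[k] dvlAlgebra B))
      = ((B⁻¹).map (algebraMap k (dvlAlgebra B))).map (incR B) := (map_smap (incR B) B⁻¹).symm
  rw [TT_transpose, TT, e1]
  simp only [mul_assoc]
  rw [map3assoc (incL B), M2, ← e1, e2, map3 (incR B), M2]

/-- The comultiplication. -/
noncomputable def dvlComul : dvlAlgebra B →ₐ[k] dvlAlgebra B ⊗[k] dvlAlgebra B :=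
  RingQuot.liftAlgHom k ⟨FreeAlgebra.lift k fun p => TT B p.1 p.2, by
    intro x y h
    induction h with
    | rel1 lam rho =>
        simp only [map_sum, _root_.map_smul, _root_.map_mul, FreeAlgebra.lift_ι_apply,
          AlgHom.commutes]
        refine (conv1 (TT B) (TT B) B lam rho).trans ?_
        rw [MTT1, Matrix.map_apply]
    | rel2 lam rho =>
        simp only [map_sum, _root_.map_smul, _root_.map_mul, FreeAlgebra.lift_ι_apply,
          AlgHom.commutes]
        refine (conv2 (TT B) (TT B) B⁻¹ lam rho).trans ?_
        rw [MTT2, Matrix.map_apply]⟩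

lemma dvlComul_t (i j : Fin n) :
    dvlComul B (dvlT B i j) = ∑ l, dvlT B i l ⊗ₜ[k] dvlT B l j := by
  rw [← TT_apply]
  simp [dvlComul, dvlT, RingQuot.liftAlgHom_mkAlgHom_apply, FreeAlgebra.lift_ι_apply]

end DVLaux

namespace DVLaux
variable {k : Type*} [Field k] {n : ℕ} (B : Matrix (Fin n) (Fin n) k)

lemma op_sum {α β : Type*} [AddCommMonoid β] (s : Finset α) (g : α → β) :
    MulOpposite.op (∑ i ∈ s, g i) = ∑ i ∈ s, MulOpposite.op (g i) :=
  map_sum (MulOpposite.opAddEquiv : β ≃+ βᵐᵒᵖ) g s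

lemma convS1 {R : Type*} [Semiring R] [Algebra k R] (u v : Matrix (Fin n) (Fin n) R)
    (C : Matrix (Fin n) (Fin n) k) (l r : Fin n) :
    ∑ μ, ∑ ν, C μ ν • (u l ν * v r μ) = (u * Cᵀ.map (algebraMap k R) * vᵀ) l r := by
  rw [Finset.sum_comm]
  exact conv1 u v Cᵀ l r

lemma convS2 {R : Type*} [Semiring R] [Algebra k R] (u v : Matrix (Fin n) (Fin n) R)
    (C : Matrix (Fin n) (Fin n) k) (l r : Fin n) :
    ∑ μ, ∑ ν, C μ ν • (u ν l * v μ r) = (uᵀ * Cᵀ.map (algebraMap k R) * v) l r := by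
  rw [Finset.sum_comm]
  exact conv2 u v Cᵀ l r

/-- The antipode as an algebra map into the opposite algebra. -/
noncomputable def dvlSop (hB : IsUnit B) : dvlAlgebra B →ₐ[k] (dvlAlgebra B)ᵐᵒᵖ :=
  RingQuot.liftAlgHom k ⟨FreeAlgebra.lift k fun p => MulOpposite.op (Sm B p.1 p.2), by
    intro x y h
    induction h with
    | rel1 lam rho =>
        simp only [map_sum, _root_.map_smul, _root_.map_mul, FreeAlgebra.lift_ι_apply,
          ← MulOpposite.op_mul, ← MulOpposite.op_smul, ← op_sum, AlgHom.commutes, MulOpposite.algebraMap_apply]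
        congr 1
        refine (convS1 (Sm B) (Sm B) B rho lam).trans ?_
        rw [idI B hB, Matrix.map_apply, Matrix.transpose_apply]
    | rel2 lam rho =>
        simp only [map_sum, _root_.map_smul, _root_.map_mul, FreeAlgebra.lift_ι_apply,
          ← MulOpposite.op_mul, ← MulOpposite.op_smul, ← op_sum, AlgHom.commutes, MulOpposite.algebraMap_apply]
        congr 1
        refine (convS2 (Sm B) (Sm B) B⁻¹ rho lam).trans ?_
        rw [idII B hB, Matrix.map_apply, Matrix.transpose_apply]⟩

/-- The antipode. -/
noncomputable def dvlS (hB : IsUnit B) : dvlAlgebra B →ₗ[k] dvlAlgebra B :=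
  (MulOpposite.opLinearEquiv k).symm.toLinearMap ∘ₗ (dvlSop B hB).toLinearMap

lemma dvlS_mul (hB : IsUnit B) (x y : dvlAlgebra B) :
    dvlS B hB (x * y) = dvlS B hB y * dvlS B hB x := by
  simp [dvlS, _root_.map_mul]

lemma dvlS_one (hB : IsUnit B) : dvlS B hB 1 = 1 := by
  simp [dvlS]

lemma dvlS_algebraMap (hB : IsUnit B) (c : k) :
    dvlS B hB (algebraMap k (dvlAlgebra B) c) = algebraMap k (dvlAlgebra B) c := by
  simp [dvlS, AlgHom.commutes, MulOpposite.algebraMap_apply]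

lemma dvlS_t (hB : IsUnit B) (i j : Fin n) : dvlS B hB (dvlT B i j) = Sm B i j := by
  simp [dvlS, dvlSop, dvlT, RingQuot.liftAlgHom_mkAlgHom_apply, FreeAlgebra.lift_ι_apply]

lemma anti_left (hB : IsUnit B) (i j : Fin n) :
    ∑ l, Sm B i l * dvlT B l j = algebraMap k (dvlAlgebra B) (if i = j then 1 else 0) := by
  have h := congrFun (congrFun (idIII B hB) i) j
  rw [Matrix.mul_apply] at h
  simp only [Tm, Matrix.of_apply] at h
  rw [h, Matrix.one_apply]
  split <;> simp

lemma anti_right (hB : IsUnit B) (i j : Fin n) :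
    ∑ l, dvlT B i l * Sm B l j = algebraMap k (dvlAlgebra B) (if i = j then 1 else 0) := by
  have h := congrFun (congrFun (idIV B hB) i) j
  rw [Matrix.mul_apply] at h
  simp only [Tm, Matrix.of_apply] at h
  rw [h, Matrix.one_apply]
  split <;> simp

end DVLaux

namespace DVLaux
variable {k : Type*} [Field k] {n : ℕ} (B : Matrix (Fin n) (Fin n) k) (hB : IsUnit B)

lemma key_r (a b : dvlAlgebra B) (u : dvlAlgebra B ⊗[k] dvlAlgebra B) :
    LinearMap.mul' k (dvlAlgebra B) ((dvlS B hB).rTensor (dvlAlgebra B) (u * (a ⊗ₜ[k] b)))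
      = dvlS B hB a *
        LinearMap.mul' k (dvlAlgebra B) ((dvlS B hB).rTensor (dvlAlgebra B) u) * b := by
  induction u using TensorProduct.induction_on with
  | zero => simp
  | tmul p q =>
      simp only [Algebra.TensorProduct.tmul_mul_tmul, LinearMap.rTensor_tmul,
        LinearMap.mul'_apply, dvlS_mul, mul_assoc]
  | add u v hu hv => simp [add_mul, mul_add, hu, hv]

lemma key_l (a b : dvlAlgebra B) (u : dvlAlgebra B ⊗[k] dvlAlgebra B) :
    LinearMap.mul' k (dvlAlgebra B) ((dvlS B hB).lTensor (dvlAlgebra B) ((a ⊗ₜ[k] b) * u))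
      = a * LinearMap.mul' k (dvlAlgebra B) ((dvlS B hB).lTensor (dvlAlgebra B) u)
        * dvlS B hB b := by
  induction u using TensorProduct.induction_on with
  | zero => simp
  | tmul p q =>
      simp only [Algebra.TensorProduct.tmul_mul_tmul, LinearMap.lTensor_tmul,
        LinearMap.mul'_apply, dvlS_mul, mul_assoc]
  | add u v hu hv => simp [add_mul, mul_add, hu, hv]

lemma conv_id (x : dvlAlgebra B) :
    LinearMap.mul' k (dvlAlgebra B) ((dvlS B hB).rTensor (dvlAlgebra B) (dvlComul B x))
      = algebraMap k (dvlAlgebra B) (dvlEps B x) ∧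
    LinearMap.mul' k (dvlAlgebra B) ((dvlS B hB).lTensor (dvlAlgebra B) (dvlComul B x))
      = algebraMap k (dvlAlgebra B) (dvlEps B x) := by
  obtain ⟨a, rfl⟩ := RingQuot.mkAlgHom_surjective k (dvlRel B) x
  induction a using FreeAlgebra.induction with
  | grade0 c =>
      rw [AlgHom.commutes]
      constructor <;>
        simp [Algebra.TensorProduct.algebraMap_apply, dvlS_algebraMap, dvlS_one,
          LinearMap.mul'_apply, AlgHom.commutes]
  | grade1 p =>
      have hp : RingQuot.mkAlgHom k (dvlRel B) (FreeAlgebra.ι k p) = dvlT B p.1 p.2 := rfl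
      rw [hp]
      constructor
      · rw [dvlComul_t, map_sum, map_sum]
        simp only [LinearMap.rTensor_tmul, LinearMap.mul'_apply, dvlS_t, dvlEps_t]
        exact anti_left B hB p.1 p.2
      · rw [dvlComul_t, map_sum, map_sum]
        simp only [LinearMap.lTensor_tmul, LinearMap.mul'_apply, dvlS_t, dvlEps_t]
        exact anti_right B hB p.1 p.2
  | mul a b iha ihb =>
      rw [_root_.map_mul (RingQuot.mkAlgHom k (dvlRel B)) a b]
      set x := RingQuot.mkAlgHom k (dvlRel B) a with hx
      set y := RingQuot.mkAlgHom k (dvlRel B) b with hy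
      constructor
      · have hstep : ∀ v : dvlAlgebra B ⊗[k] dvlAlgebra B,
            LinearMap.mul' k (dvlAlgebra B)
                ((dvlS B hB).rTensor (dvlAlgebra B) (dvlComul B x * v))
              = dvlEps B x • LinearMap.mul' k (dvlAlgebra B)
                ((dvlS B hB).rTensor (dvlAlgebra B) v) := by
          intro v
          induction v using TensorProduct.induction_on with
          | zero => simp
          | tmul c d =>
              rw [key_r, iha.1]
              simp only [LinearMap.rTensor_tmul, LinearMap.mul'_apply]
              rw [← Algebra.commutes, mul_assoc, ← Algebra.smul_def]
          | add u v hu hv => simp [mul_add, hu, hv]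
        rw [_root_.map_mul (dvlComul B) x y, hstep, ihb.1, Algebra.smul_def,
          ← _root_.map_mul, _root_.map_mul (dvlEps B) x y]
      · have hstep : ∀ v : dvlAlgebra B ⊗[k] dvlAlgebra B,
            LinearMap.mul' k (dvlAlgebra B)
                ((dvlS B hB).lTensor (dvlAlgebra B) (v * dvlComul B y))
              = dvlEps B y • LinearMap.mul' k (dvlAlgebra B)
                ((dvlS B hB).lTensor (dvlAlgebra B) v) := by
          intro v
          induction v using TensorProduct.induction_on with
          | zero => simp
          | tmul c d =>
              rw [key_l, ihb.2]
              simp only [LinearMap.lTensor_tmul, LinearMap.mul'_apply]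
              rw [← Algebra.commutes, mul_assoc, ← Algebra.smul_def]
          | add u v hu hv => simp [add_mul, hu, hv]
        rw [_root_.map_mul (dvlComul B) x y, hstep, iha.2, Algebra.smul_def,
          ← _root_.map_mul, mul_comm (dvlEps B y) (dvlEps B x), _root_.map_mul (dvlEps B) x y]
  | add a b iha ihb =>
      refine ⟨?_, ?_⟩ <;> simp only [map_add, iha.1, ihb.1, iha.2, ihb.2]

end DVLaux


/-- `H(B)` carries the comatrix bialgebra structure and the formula
`S(𝐭) = B 𝐭ᵀ B⁻¹` defines an antipode, making `H(B)` a Hopf algebra. -/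
theorem stmt17 {k : Type*} [Field k] {n : ℕ} (B : Matrix (Fin n) (Fin n) k)
    (hB : IsUnit B) :
    ∃ (Δ : dvlAlgebra B →ₐ[k] (dvlAlgebra B ⊗[k] dvlAlgebra B))
      (ε : dvlAlgebra B →ₐ[k] k) (S : dvlAlgebra B →ₗ[k] dvlAlgebra B),
      (∀ i j, Δ (dvlT B i j) = ∑ l, dvlT B i l ⊗ₜ[k] dvlT B l j) ∧
      (∀ i j, ε (dvlT B i j) = if i = j then 1 else 0) ∧
      (∀ x y, S (x * y) = S y * S x) ∧ S 1 = 1 ∧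
      (∀ i j, S (dvlT B i j) =
        ((B.map (algebraMap k (dvlAlgebra B))) * (Matrix.of (dvlT B)).transpose *
          ((B⁻¹).map (algebraMap k (dvlAlgebra B)))) i j) ∧
      (LinearMap.mul' k (dvlAlgebra B) ∘ₗ S.rTensor (dvlAlgebra B) ∘ₗ Δ.toLinearMap =
        Algebra.linearMap k (dvlAlgebra B) ∘ₗ ε.toLinearMap) ∧
      (LinearMap.mul' k (dvlAlgebra B) ∘ₗ S.lTensor (dvlAlgebra B) ∘ₗ Δ.toLinearMap =
        Algebra.linearMap k (dvlAlgebra B) ∘ₗ ε.toLinearMap) := by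
  refine ⟨DVLaux.dvlComul B, DVLaux.dvlEps B, DVLaux.dvlS B hB,
    DVLaux.dvlComul_t B, DVLaux.dvlEps_t B, DVLaux.dvlS_mul B hB, DVLaux.dvlS_one B hB,
    fun i j => DVLaux.dvlS_t B hB i j, ?_, ?_⟩
  · ext x
    simpa using (DVLaux.conv_id B hB x).1
  · ext x
    simpa using (DVLaux.conv_id B hB x).2
end
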